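/- Let X_t ∈ ℝ^{n1×n2} and X ∈ ℝ^{n1×n2} both have rank r, with compact SVDs X_t = V_tΣ_tW_tᵀ and X = VΣWᵀ. Then ‖V_tV_tᵀ − VVᵀ‖ ≤ ‖X_t − X‖ / σ_min(X_t), ‖V_tV_tᵀ − VVᵀ‖_F ≤ √2·‖X_t − X‖_F / σ_min(X_t), ‖W_tW_tᵀ − WWᵀ‖ ≤ ‖X_t − X‖ / σ_min(X_t), and ‖W_tW_tᵀ − WWᵀ‖_F ≤ √2·‖X_t − X‖_F / σ_min(X_t). -/

import Mathlib

open Matrix MeasureTheory ProbabilityTheory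
open scoped BigOperators

noncomputable section

/-- Frobenius inner product `⟨A, B⟩ = trace (Aᵀ * B)`. -/
def frobInner {n1 n2 : ℕ} (A B : Matrix (Fin n1) (Fin n2) ℝ) : ℝ :=
  Matrix.trace (Aᵀ * B)

/-- Frobenius norm of a matrix. -/
def frobNorm {n1 n2 : ℕ} (A : Matrix (Fin n1) (Fin n2) ℝ) : ℝ :=
  Real.sqrt (∑ i, ∑ j, A i j ^ 2)

/-- Spectral (ℓ²-operator) norm of a matrix. -/
def specNorm {n1 n2 : ℕ} (A : Matrix (Fin n1) (Fin n2) ℝ) : ℝ :=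
  ‖LinearMap.toContinuousLinearMap (Matrix.toEuclideanLin A)‖

/-- Euclidean norm of a vector in ℝ^m. -/
def vecNorm {m : ℕ} (v : Fin m → ℝ) : ℝ :=
  Real.sqrt (∑ i, v i ^ 2)

/-- Smallest nonzero singular value of a matrix: the singular values of `X` are the
square roots of the eigenvalues of `Xᴴ * X`. -/
def sigmaMin {n1 n2 : ℕ} (X : Matrix (Fin n1) (Fin n2) ℝ) : ℝ :=
  sInf {s : ℝ | 0 < s ∧ ∃ i : Fin n2,
    s ^ 2 = ((Matrix.isHermitian_conjTranspose_mul_self X : (Xᵀ * X).IsHermitian)).eigenvalues i}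

/-- The measurement operator `𝒜(X) i = (1/√m) ⟨A i, X⟩`. -/
def measOp {n1 n2 m : ℕ} (A : Fin m → Matrix (Fin n1) (Fin n2) ℝ)
    (X : Matrix (Fin n1) (Fin n2) ℝ) : Fin m → ℝ :=
  fun i => (Real.sqrt m)⁻¹ * frobInner (A i) X

/-- The adjoint `𝒜*(u) = (1/√m) ∑ i, u i • A i`. -/
def measAdj {n1 n2 m : ℕ} (A : Fin m → Matrix (Fin n1) (Fin n2) ℝ)
    (u : Fin m → ℝ) : Matrix (Fin n1) (Fin n2) ℝ :=
  (Real.sqrt m)⁻¹ • ∑ i, u i • A i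

/-- The composite operator `𝒜*𝒜`. -/
def opAA {n1 n2 m : ℕ} (A : Fin m → Matrix (Fin n1) (Fin n2) ℝ)
    (X : Matrix (Fin n1) (Fin n2) ℝ) : Matrix (Fin n1) (Fin n2) ℝ :=
  measAdj A (measOp A X)

/-- Rank-`k` restricted isometry property with constant `δ`. -/
def HasRIP {n1 n2 m : ℕ} (A : Fin m → Matrix (Fin n1) (Fin n2) ℝ) (k : ℕ) (δ : ℝ) : Prop :=
  ∀ Z : Matrix (Fin n1) (Fin n2) ℝ, Z.rank ≤ k →
    (1 - δ) * frobNorm Z ^ 2 ≤ vecNorm (measOp A Z) ^ 2 ∧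
      vecNorm (measOp A Z) ^ 2 ≤ (1 + δ) * frobNorm Z ^ 2

/-- Compact SVD: `X = V * S * Wᵀ`, `V, W` with orthonormal columns, `S` diagonal with
positive diagonal entries. -/
def IsCompactSVD {n1 n2 r : ℕ} (X : Matrix (Fin n1) (Fin n2) ℝ)
    (V : Matrix (Fin n1) (Fin r) ℝ) (S : Matrix (Fin r) (Fin r) ℝ)
    (W : Matrix (Fin n2) (Fin r) ℝ) : Prop :=
  X = V * S * Wᵀ ∧ Vᵀ * V = 1 ∧ Wᵀ * W = 1 ∧
    (∀ i j, i ≠ j → S i j = 0) ∧ (∀ i, 0 < S i i)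

/-- `Vp` is a matrix whose columns form an orthonormal basis of the orthogonal
complement of the column space of `V` (which has orthonormal columns). -/
def IsOrthComplement {n r : ℕ} (V : Matrix (Fin n) (Fin r) ℝ)
    (Vp : Matrix (Fin n) (Fin (n - r)) ℝ) : Prop :=
  Vpᵀ * Vp = 1 ∧ Vᵀ * Vp = 0

end

/-
With `P = Vt Vtᵀ`, `Q = V Vᵀ` and `D = Xt - X`: since `Q X = X` and `Vt = Xt Wt St⁻¹`,
`(1 - Q) Vt = (1 - Q) D Wt St⁻¹`, so `(1 - Q) P` has spectral and Frobenius norm at most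
`‖D‖ / σ` whenever `σ ≤ St j j` for all `j`; and `σ_min(Xt) ≤ St j j` because every `St j j ^ 2`
is an eigenvalue of `Xtᵀ Xt`. For projections of equal rank, `(1 - Q) P` controls `P - Q`:
`‖P - Q‖_F² = 2 ‖(1 - Q) P‖_F²` is a trace identity, and in operator norm equal rank gives
`‖(1 - P) Q‖ ≤ ‖(1 - Q) P‖` (the compression `Q P` from the range of `P` to the range of `Q`
is injective with the right lower bound, hence invertible, and so is its adjoint), after which
`P - Q` splits orthogonally. The bounds for `W` follow by transposing.
-/
section IsometricEmbedding

open ContinuousLinearMap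
open scoped RealInnerProductSpace

variable {F G : Type*} [NormedAddCommGroup F] [InnerProductSpace ℝ F] [CompleteSpace F]
  [NormedAddCommGroup G] [InnerProductSpace ℝ G] [CompleteSpace G] {u w : G →L[ℝ] F}

lemma inner_apply_sub_proj_eq_zero (hu : adjoint u ∘L u = 1) (z : G) (x : F) :
    ⟪u z, x - u (adjoint u x)⟫ = 0 := by
  rw [inner_sub_right, ← adjoint_inner_right, (inner_map_map_iff_adjoint_comp_self u).2 hu,
    sub_self]

lemma norm_sq_eq_norm_sq_proj_add (hu : adjoint u ∘L u = 1) (x : F) :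
    ‖x‖ ^ 2 = ‖u (adjoint u x)‖ ^ 2 + ‖x - u (adjoint u x)‖ ^ 2 := by
  have h := norm_add_sq_eq_norm_sq_add_norm_sq_real
    (inner_apply_sub_proj_eq_zero hu (adjoint u x) x)
  rw [add_sub_cancel] at h
  simpa only [sq] using h

lemma norm_sub_proj_le (hu : adjoint u ∘L u = 1) (x : F) : ‖x - u (adjoint u x)‖ ≤ ‖x‖ :=
  le_of_sq_le_sq (by nlinarith [norm_sq_eq_norm_sq_proj_add hu x]) (norm_nonneg x)

/-- The lower bound `a ‖z‖² ≤ ‖m z‖²` passes to the adjoint: it makes `m` injective, hence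
surjective, and `‖m y‖² = ⟪m† (m y), y⟫` compares `‖m y‖` with `‖m† (m y)‖`. -/
lemma le_norm_sq_adjoint_apply [FiniteDimensional ℝ G] {m : G →L[ℝ] G} {a : ℝ}
    (hm : ∀ z, a * ‖z‖ ^ 2 ≤ ‖m z‖ ^ 2) (z : G) : a * ‖z‖ ^ 2 ≤ ‖adjoint m z‖ ^ 2 := by
  rcases le_or_gt a 0 with ha | ha
  · nlinarith [sq_nonneg ‖z‖, sq_nonneg ‖adjoint m z‖]
  have hinj : Function.Injective m := by
    refine (injective_iff_map_eq_zero m).2 fun y hy => norm_eq_zero.1 ?_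
    have := hm y
    rw [hy, norm_zero, zero_pow two_ne_zero] at this
    exact pow_eq_zero_iff two_ne_zero |>.1 (le_antisymm (by nlinarith) (sq_nonneg _))
  obtain ⟨y, rfl⟩ : ∃ y, m y = z := LinearMap.injective_iff_surjective.1 hinj z
  have hmy : ‖m y‖ ^ 2 ≤ ‖adjoint m (m y)‖ * ‖y‖ := by
    rw [← real_inner_self_eq_norm_sq, ← adjoint_inner_left]
    exact real_inner_le_norm _ _
  have hy := hm y
  rcases (norm_nonneg (m y)).eq_or_lt with h0 | hpos
  · rw [← h0]; nlinarith [sq_nonneg ‖adjoint m (m y)‖]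
  have h4 : ‖m y‖ ^ 4 ≤ ‖adjoint m (m y)‖ ^ 2 * ‖y‖ ^ 2 := by
    nlinarith [pow_le_pow_left₀ (by positivity) hmy 2]
  have h5 : a * ‖m y‖ ^ 2 * ‖m y‖ ^ 2 ≤ ‖adjoint m (m y)‖ ^ 2 * ‖m y‖ ^ 2 := by
    nlinarith [mul_le_mul_of_nonneg_left hy (sq_nonneg ‖adjoint m (m y)‖),
      mul_le_mul_of_nonneg_left h4 ha.le]
  exact le_of_mul_le_mul_right h5 (by positivity)

/-- The ranges of `u` and `w` have the same dimension; this enters through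
`le_norm_sq_adjoint_apply` applied to `w† ∘ u`. -/
lemma norm_sub_proj_apply_le_symm [FiniteDimensional ℝ G] (hu : adjoint u ∘L u = 1)
    (hw : adjoint w ∘L w = 1) {R : ℝ} (hR : 0 ≤ R)
    (h : ∀ z, ‖u z - w (adjoint w (u z))‖ ≤ R * ‖z‖) (z : G) :
    ‖w z - u (adjoint u (w z))‖ ≤ R * ‖z‖ := by
  have hu' := (norm_map_iff_adjoint_comp_self u).2 hu
  have hw' := (norm_map_iff_adjoint_comp_self w).2 hw
  have hm : ∀ z, (1 - R ^ 2) * ‖z‖ ^ 2 ≤ ‖(adjoint w ∘L u) z‖ ^ 2 := fun z => by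
    have := norm_sq_eq_norm_sq_proj_add hw (u z)
    rw [hu', hw'] at this
    rw [ContinuousLinearMap.comp_apply]
    nlinarith [pow_le_pow_left₀ (norm_nonneg _) (h z) 2]
  have hadj : adjoint (adjoint w ∘L u) = adjoint u ∘L w := by
    rw [adjoint_comp, adjoint_adjoint]
  have := le_norm_sq_adjoint_apply hm z
  rw [hadj, ContinuousLinearMap.comp_apply] at this
  have hpy := norm_sq_eq_norm_sq_proj_add hu (w z)
  rw [hu', hw'] at hpy
  exact le_of_sq_le_sq (by nlinarith) (by positivity)

lemma norm_proj_apply_le_of_adjoint_eq_zero [FiniteDimensional ℝ G] (hu : adjoint u ∘L u = 1)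
    (hw : adjoint w ∘L w = 1) {R : ℝ} (hR : 0 ≤ R)
    (h : ∀ z, ‖u z - w (adjoint w (u z))‖ ≤ R * ‖z‖) {y : F} (hy : adjoint u y = 0) :
    ‖w (adjoint w y)‖ ≤ R * ‖y‖ := by
  set b := adjoint w y
  have hb : ‖b‖ * ‖b‖ ≤ ‖b‖ * (R * ‖y‖) :=
    calc ‖b‖ * ‖b‖ = ⟪w b - u (adjoint u (w b)), y⟫ := by
          rw [inner_sub_left, ← adjoint_inner_right u, hy, inner_zero_right, sub_zero,
            ← adjoint_inner_right w, real_inner_self_eq_norm_mul_norm]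
      _ ≤ ‖w b - u (adjoint u (w b))‖ * ‖y‖ := real_inner_le_norm _ _
      _ ≤ R * ‖b‖ * ‖y‖ := by
          gcongr
          exact norm_sub_proj_apply_le_symm hu hw hR h b
      _ = ‖b‖ * (R * ‖y‖) := by ring
  rw [(norm_map_iff_adjoint_comp_self w).2 hw]
  rcases (norm_nonneg b).eq_or_lt with h0 | hpos
  · rw [← h0]; positivity
  · exact le_of_mul_le_mul_left hb hpos

/-- `u ∘ u†` and `w ∘ w†` are the orthogonal projections onto the ranges of `u` and `w`: two
projections of equal rank. The vector `u u† x - w w† x` splits orthogonally into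
`(1 - w w†) u u† x` and `-w w† (1 - u u†) x`. -/
theorem norm_proj_sub_proj_apply_le [FiniteDimensional ℝ G] (hu : adjoint u ∘L u = 1)
    (hw : adjoint w ∘L w = 1) {R : ℝ} (hR : 0 ≤ R)
    (h : ∀ z, ‖u z - w (adjoint w (u z))‖ ≤ R * ‖z‖) (x : F) :
    ‖u (adjoint u x) - w (adjoint w x)‖ ≤ R * ‖x‖ := by
  have hx := norm_sq_eq_norm_sq_proj_add hu x
  set p := u (adjoint u x)
  have hsplit : p - w (adjoint w x) = (p - w (adjoint w p)) - w (adjoint w (x - p)) := by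
    simp only [map_sub]; abel
  have horth : ⟪p - w (adjoint w p), w (adjoint w (x - p))⟫ = 0 := by
    rw [real_inner_comm]; exact inner_apply_sub_proj_eq_zero hw _ _
  have h1 : ‖p - w (adjoint w p)‖ ≤ R * ‖p‖ := by
    rw [show ‖p‖ = ‖adjoint u x‖ from (norm_map_iff_adjoint_comp_self u).2 hu _]
    exact h (adjoint u x)
  have h2 : ‖w (adjoint w (x - p))‖ ≤ R * ‖x - p‖ := by
    refine norm_proj_apply_le_of_adjoint_eq_zero hu hw hR h ?_
    simpa [p, sub_eq_zero] using (DFunLike.congr_fun hu (adjoint u x)).symm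
  have hpyth := norm_sub_sq_eq_norm_sq_add_norm_sq_real horth
  rw [← hsplit] at hpyth
  refine le_of_sq_le_sq ?_ (by positivity)
  rw [mul_pow, hx]
  nlinarith [pow_le_pow_left₀ (norm_nonneg _) h1 2, pow_le_pow_left₀ (norm_nonneg _) h2 2]

end IsometricEmbedding

section EuclideanOp

open ContinuousLinearMap

variable {l m n : Type*} [Fintype l] [Fintype m] [Fintype n]

noncomputable def Matrix.toEuclideanOp [DecidableEq n] (A : Matrix m n ℝ) :
    EuclideanSpace ℝ n →L[ℝ] EuclideanSpace ℝ m :=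
  LinearMap.toContinuousLinearMap (toEuclideanLin A)

lemma Matrix.toEuclideanOp_mul [DecidableEq m] [DecidableEq n] (A : Matrix l m ℝ)
    (B : Matrix m n ℝ) : (A * B).toEuclideanOp = A.toEuclideanOp ∘L B.toEuclideanOp := by
  ext x i
  simp [toEuclideanOp, mulVec_mulVec]

lemma Matrix.toEuclideanOp_sub [DecidableEq n] (A B : Matrix m n ℝ) :
    (A - B).toEuclideanOp = A.toEuclideanOp - B.toEuclideanOp := by
  simp [toEuclideanOp]

lemma Matrix.toEuclideanOp_transpose [DecidableEq m] [DecidableEq n] (A : Matrix m n ℝ) :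
    Aᵀ.toEuclideanOp = adjoint A.toEuclideanOp := by
  rw [toEuclideanOp, ← conjTranspose_eq_transpose_of_trivial,
    toEuclideanLin_conjTranspose_eq_adjoint, LinearMap.adjoint_toContinuousLinearMap]
  rfl

lemma Matrix.adjoint_comp_toEuclideanOp [DecidableEq m] [DecidableEq n] {A : Matrix m n ℝ}
    (hA : Aᵀ * A = 1) : adjoint A.toEuclideanOp ∘L A.toEuclideanOp = 1 := by
  rw [← toEuclideanOp_transpose, ← toEuclideanOp_mul, hA]
  ext x i
  simp [toEuclideanOp]

lemma Matrix.norm_toEuclideanOp_diagonal_apply_le [DecidableEq n] {t : n → ℝ} {B : ℝ}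
    (hB0 : 0 ≤ B) (hB : ∀ j, |t j| ≤ B) (z : EuclideanSpace ℝ n) :
    ‖(diagonal t).toEuclideanOp z‖ ≤ B * ‖z‖ := by
  rw [EuclideanSpace.norm_eq, EuclideanSpace.norm_eq, ← Real.sqrt_sq hB0,
    ← Real.sqrt_mul (sq_nonneg _), Finset.mul_sum]
  refine Real.sqrt_le_sqrt (Finset.sum_le_sum fun j _ => ?_)
  simp only [toEuclideanOp, LinearMap.coe_toContinuousLinearMap', toLpLin_apply,
    mulVec_diagonal, Real.norm_eq_abs, sq_abs, mul_pow]
  exact mul_le_mul_of_nonneg_right (sq_le_sq.2 (by simpa [abs_of_nonneg hB0] using hB j))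
    (sq_nonneg _)

end EuclideanOp

lemma specNorm_transpose {a b : ℕ} (A : Matrix (Fin a) (Fin b) ℝ) :
    specNorm Aᵀ = specNorm A := by
  rw [specNorm, specNorm, ← toEuclideanOp, ← toEuclideanOp, toEuclideanOp_transpose,
    ContinuousLinearMap.adjoint.norm_map]

lemma sigmaMin_nonneg {n1 n2 : ℕ} (X : Matrix (Fin n1) (Fin n2) ℝ) : 0 ≤ sigmaMin X :=
  Real.sInf_nonneg fun _ hs => hs.1.le

namespace IsCompactSVD

variable {n1 n2 r : ℕ} {X : Matrix (Fin n1) (Fin n2) ℝ} {V : Matrix (Fin n1) (Fin r) ℝ}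
  {S : Matrix (Fin r) (Fin r) ℝ} {W : Matrix (Fin n2) (Fin r) ℝ}

lemma eq_diagonal (h : IsCompactSVD X V S W) : S = diagonal fun j => S j j := by
  ext i j
  rcases eq_or_ne i j with rfl | hij
  · simp
  · simp [h.2.2.2.1 i j hij, hij]

lemma transpose (h : IsCompactSVD X V S W) : IsCompactSVD Xᵀ W S V := by
  refine ⟨?_, h.2.2.1, h.2.1, h.2.2.2⟩
  rw [h.1, transpose_mul, transpose_mul, transpose_transpose, ← Matrix.mul_assoc, h.eq_diagonal,
    diagonal_transpose]

lemma proj_mul (h : IsCompactSVD X V S W) : V * Vᵀ * X = X := by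
  rw [h.1, ← Matrix.mul_assoc, ← Matrix.mul_assoc, Matrix.mul_assoc V, h.2.1, Matrix.mul_one]

lemma mul_mul_diagonal_inv (h : IsCompactSVD X V S W) :
    X * W * diagonal (fun j => (S j j)⁻¹) = V := by
  have hS : S * diagonal (fun j => (S j j)⁻¹) = 1 := by
    rw [h.eq_diagonal, diagonal_mul_diagonal]
    simp [mul_inv_cancel₀ (h.2.2.2.2 _).ne']
  rw [h.1, Matrix.mul_assoc (V * S), h.2.2.1, Matrix.mul_one, Matrix.mul_assoc, hS,
    Matrix.mul_one]

lemma sub_proj_mul_eq {Xt : Matrix (Fin n1) (Fin n2) ℝ} {Vt : Matrix (Fin n1) (Fin r) ℝ}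
    {St : Matrix (Fin r) (Fin r) ℝ} {Wt : Matrix (Fin n2) (Fin r) ℝ}
    (hXt : IsCompactSVD Xt Vt St Wt) (hX : IsCompactSVD X V S W) :
    Vt - V * Vᵀ * Vt =
      (Xt - X - V * Vᵀ * (Xt - X)) * Wt * diagonal (fun j => (St j j)⁻¹) := by
  have hD : Xt - X - V * Vᵀ * (Xt - X) = Xt - V * Vᵀ * Xt := by
    rw [Matrix.mul_sub, hX.proj_mul]; abel
  rw [hD, Matrix.sub_mul, Matrix.sub_mul, hXt.mul_mul_diagonal_inv, Matrix.mul_assoc _ Xt,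
    Matrix.mul_assoc _ (Xt * Wt), hXt.mul_mul_diagonal_inv]

/-- The `j`-th column of `W` is an eigenvector of `Xᵀ X` with eigenvalue `S j j ^ 2`. -/
lemma sq_diag_mem_spectrum (h : IsCompactSVD X V S W) (j : Fin r) :
    S j j ^ 2 ∈ spectrum ℝ (Xᵀ * X) := by
  obtain ⟨d, rfl⟩ : ∃ d, S = diagonal d := ⟨_, h.eq_diagonal⟩
  obtain ⟨hX, hV, hW, -, -⟩ := h
  have hXXW : Xᵀ * X * W = W * diagonal fun k => d k ^ 2 :=
    calc Xᵀ * X * W = W * diagonal d * (Vᵀ * V) * diagonal d * (Wᵀ * W) := by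
          rw [hX, transpose_mul, transpose_mul, transpose_transpose, diagonal_transpose]
          simp only [Matrix.mul_assoc]
      _ = W * diagonal fun k => d k ^ 2 := by
          rw [hV, hW, Matrix.mul_one, Matrix.mul_one, Matrix.mul_assoc, diagonal_mul_diagonal]
          simp only [sq]
  have hy : W *ᵥ Pi.single j 1 ≠ 0 := fun h0 => by
    have h1 := congrArg (Wᵀ *ᵥ ·) h0
    simp only [mulVec_mulVec, hW, one_mulVec, mulVec_zero] at h1
    simpa using congrFun h1 j
  have heig : (Xᵀ * X) *ᵥ (W *ᵥ Pi.single j 1) = d j ^ 2 • (W *ᵥ Pi.single j 1) := by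
    rw [mulVec_mulVec, hXXW, ← mulVec_mulVec, diagonal_mulVec_single, ← mulVec_smul,
      ← smul_eq_mul, Pi.single_smul]
  rw [diagonal_apply_eq, ← spectrum_toLin']
  exact (Module.End.hasEigenvalue_of_hasEigenvector
    (Module.End.hasEigenvector_iff.2 ⟨Module.End.mem_eigenspace_iff.2 heig, hy⟩)).mem_spectrum

lemma exists_sq_diag_eq_eigenvalue (h : IsCompactSVD X V S W) (j : Fin r) :
    ∃ i, S j j ^ 2 = (isHermitian_conjTranspose_mul_self X).eigenvalues i := by
  obtain ⟨i, hi⟩ : S j j ^ 2 ∈ Set.range (isHermitian_conjTranspose_mul_self X).eigenvalues := by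
    rw [← IsHermitian.spectrum_real_eq_range_eigenvalues]
    exact h.sq_diag_mem_spectrum j
  exact ⟨i, hi.symm⟩

lemma sigmaMin_le (h : IsCompactSVD X V S W) (j : Fin r) : sigmaMin X ≤ S j j :=
  csInf_le ⟨0, fun _ hs => hs.1.le⟩ ⟨h.2.2.2.2 j, h.exists_sq_diag_eq_eigenvalue j⟩

/-- The singular values form a finite set, which therefore contains its infimum. -/
lemma sigmaMin_pos [Nonempty (Fin r)] (h : IsCompactSVD X V S W) : 0 < sigmaMin X := by
  set σ := (isHermitian_conjTranspose_mul_self X).eigenvalues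
  let j : Fin r := Classical.arbitrary _
  have hfin : {s : ℝ | 0 < s ∧ ∃ i, s ^ 2 = σ i}.Finite :=
    (Set.finite_range fun i => √(σ i)).subset fun s ⟨hs, i, hi⟩ =>
      ⟨i, by simp only [← hi, Real.sqrt_sq hs.le]⟩
  exact (Set.Nonempty.csInf_mem (s := {s : ℝ | 0 < s ∧ ∃ i, s ^ 2 = σ i})
    ⟨S j j, h.2.2.2.2 j, h.exists_sq_diag_eq_eigenvalue j⟩ hfin).1

end IsCompactSVD

open ContinuousLinearMap in
theorem IsCompactSVD.specNorm_proj_sub_le {n1 n2 r : ℕ} {Xt X : Matrix (Fin n1) (Fin n2) ℝ}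
    {Vt V : Matrix (Fin n1) (Fin r) ℝ} {St S : Matrix (Fin r) (Fin r) ℝ}
    {Wt W : Matrix (Fin n2) (Fin r) ℝ} (hXt : IsCompactSVD Xt Vt St Wt)
    (hX : IsCompactSVD X V S W) {σ : ℝ} (hσ : 0 < σ) (hσS : ∀ j, σ ≤ St j j) :
    specNorm (Vt * Vtᵀ - V * Vᵀ) ≤ specNorm (Xt - X) / σ := by
  set D := (Xt - X).toEuclideanOp
  set w := V.toEuclideanOp
  have hu := adjoint_comp_toEuclideanOp hXt.2.1
  have hw := adjoint_comp_toEuclideanOp hX.2.1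
  have hR : 0 ≤ ‖D‖ / σ := by positivity
  have hsub : ∀ {k} (A : Matrix (Fin n1) (Fin k) ℝ) z,
      (A - V * Vᵀ * A).toEuclideanOp z =
        A.toEuclideanOp z - w (adjoint w (A.toEuclideanOp z)) := fun A z => by
    rw [toEuclideanOp_sub, toEuclideanOp_mul, toEuclideanOp_mul, toEuclideanOp_transpose]; rfl
  have hrange (z) :
      ‖Vt.toEuclideanOp z - w (adjoint w (Vt.toEuclideanOp z))‖ ≤ ‖D‖ / σ * ‖z‖ := by
    have hT := norm_toEuclideanOp_diagonal_apply_le (inv_nonneg.2 hσ.le)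
      (fun j => by rw [abs_inv, abs_of_pos (hσ.trans_le (hσS j))]; exact inv_anti₀ hσ (hσS j))
      z
    have hWt := (norm_map_iff_adjoint_comp_self _).2 (adjoint_comp_toEuclideanOp hXt.2.2.1)
    set y := Wt.toEuclideanOp ((diagonal fun j => (St j j)⁻¹).toEuclideanOp z)
    calc ‖Vt.toEuclideanOp z - w (adjoint w (Vt.toEuclideanOp z))‖
        = ‖D y - w (adjoint w (D y))‖ := by
          rw [← hsub, ← hsub, hXt.sub_proj_mul_eq hX, toEuclideanOp_mul, toEuclideanOp_mul]; rfl
      _ ≤ ‖D‖ * ‖y‖ := (norm_sub_proj_le hw _).trans (D.le_opNorm y)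
      _ ≤ ‖D‖ * (σ⁻¹ * ‖z‖) := by rw [hWt]; gcongr
      _ = ‖D‖ / σ * ‖z‖ := by ring
  change ‖(Vt * Vtᵀ - V * Vᵀ).toEuclideanOp‖ ≤ ‖D‖ / σ
  refine opNorm_le_bound _ hR fun x => ?_
  have := norm_proj_sub_proj_apply_le hu hw hR hrange x
  rwa [← toEuclideanOp_transpose, ← toEuclideanOp_transpose, ← ContinuousLinearMap.comp_apply,
    ← ContinuousLinearMap.comp_apply, ← toEuclideanOp_mul, ← toEuclideanOp_mul, ← _root_.sub_apply,
    ← toEuclideanOp_sub] at this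

section Frobenius

variable {a b c r : ℕ}

lemma transpose_mul_transpose_self {m n : Type*} [Fintype n] (V : Matrix m n ℝ) :
    (V * Vᵀ)ᵀ = V * Vᵀ := by
  rw [transpose_mul, transpose_transpose]

lemma isIdempotentElem_mul_transpose {m n : Type*} [Fintype m] [Fintype n] [DecidableEq n]
    {V : Matrix m n ℝ} (hV : Vᵀ * V = 1) : IsIdempotentElem (V * Vᵀ) := by
  rw [IsIdempotentElem, Matrix.mul_assoc, ← Matrix.mul_assoc Vᵀ, hV, Matrix.one_mul]

lemma frobNorm_nonneg (A : Matrix (Fin a) (Fin b) ℝ) : 0 ≤ frobNorm A := Real.sqrt_nonneg _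

lemma frobNorm_sq (A : Matrix (Fin a) (Fin b) ℝ) : frobNorm A ^ 2 = trace (Aᵀ * A) := by
  rw [frobNorm, Real.sq_sqrt (by positivity), trace, Finset.sum_comm]
  simp [diag, mul_apply, sq]

lemma frobNorm_transpose (A : Matrix (Fin a) (Fin b) ℝ) : frobNorm Aᵀ = frobNorm A := by
  rw [frobNorm, frobNorm, Finset.sum_comm]
  rfl

lemma frobNorm_isometry_mul {W : Matrix (Fin b) (Fin r) ℝ} (hW : Wᵀ * W = 1)
    (N : Matrix (Fin r) (Fin c) ℝ) : frobNorm (W * N) = frobNorm N := by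
  rw [← sq_eq_sq₀ (frobNorm_nonneg _) (frobNorm_nonneg _), frobNorm_sq, frobNorm_sq,
    transpose_mul, Matrix.mul_assoc, ← Matrix.mul_assoc Wᵀ, hW, Matrix.one_mul]

lemma frobNorm_mul_transpose_isometry {V : Matrix (Fin b) (Fin r) ℝ} (hV : Vᵀ * V = 1)
    (N : Matrix (Fin a) (Fin r) ℝ) : frobNorm (N * Vᵀ) = frobNorm N := by
  rw [← frobNorm_transpose, transpose_mul, transpose_transpose, frobNorm_isometry_mul hV,
    frobNorm_transpose]

lemma frobNorm_sq_eq_proj_add {R : Matrix (Fin a) (Fin a) ℝ} (hR : Rᵀ = R)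
    (hRR : IsIdempotentElem R) (Z : Matrix (Fin a) (Fin c) ℝ) :
    frobNorm Z ^ 2 = frobNorm (R * Z) ^ 2 + frobNorm (Z - R * Z) ^ 2 := by
  have hRZ : Zᵀ * R * (R * Z) = Zᵀ * (R * Z) := by
    rw [Matrix.mul_assoc, ← Matrix.mul_assoc R, hRR.eq]
  simp only [frobNorm_sq, transpose_sub, transpose_mul, hR, Matrix.sub_mul, Matrix.mul_sub,
    hRZ, trace_sub, ← Matrix.mul_assoc Zᵀ R Z]
  ring

lemma frobNorm_sub_proj_mul_le {R : Matrix (Fin a) (Fin a) ℝ} (hR : Rᵀ = R)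
    (hRR : IsIdempotentElem R) (Z : Matrix (Fin a) (Fin c) ℝ) :
    frobNorm (Z - R * Z) ≤ frobNorm Z := by
  rw [← sq_le_sq₀ (frobNorm_nonneg _) (frobNorm_nonneg _), frobNorm_sq_eq_proj_add hR hRR Z]
  nlinarith [sq_nonneg (frobNorm (R * Z))]

lemma frobNorm_mul_isometry_le {W : Matrix (Fin b) (Fin r) ℝ} (hW : Wᵀ * W = 1)
    (M : Matrix (Fin a) (Fin b) ℝ) : frobNorm (M * W) ≤ frobNorm M := by
  rw [← sq_le_sq₀ (frobNorm_nonneg _) (frobNorm_nonneg _), ← frobNorm_transpose M,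
    frobNorm_sq_eq_proj_add (transpose_mul_transpose_self W) (isIdempotentElem_mul_transpose hW),
    ← frobNorm_transpose (M * W), ← frobNorm_isometry_mul hW (M * W)ᵀ, transpose_mul,
    ← Matrix.mul_assoc]
  nlinarith [sq_nonneg (frobNorm (Mᵀ - W * Wᵀ * Mᵀ))]

lemma frobNorm_mul_diagonal_inv_le {d : Fin r → ℝ} {σ : ℝ} (hσ : 0 < σ) (hd : ∀ j, σ ≤ d j)
    (M : Matrix (Fin a) (Fin r) ℝ) :
    frobNorm (M * diagonal fun j => (d j)⁻¹) ≤ frobNorm M / σ := by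
  rw [frobNorm, frobNorm, ← Real.sqrt_sq hσ.le, ← Real.sqrt_div' _ (sq_nonneg σ)]
  refine Real.sqrt_le_sqrt ?_
  simp only [mul_diagonal, Finset.sum_div, ← div_eq_mul_inv, div_pow]
  gcongr with i _ j _
  exact hd j

lemma frobNorm_sq_proj_sub_proj {P Q : Matrix (Fin a) (Fin a) ℝ} (hP : Pᵀ = P) (hQ : Qᵀ = Q)
    (hPP : IsIdempotentElem P) (hQQ : IsIdempotentElem Q) (htr : trace P = trace Q) :
    frobNorm (P - Q) ^ 2 = 2 * frobNorm (P - Q * P) ^ 2 := by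
  have hPQP : trace (P * Q * P) = trace (P * Q) := by rw [trace_mul_cycle, hPP.eq]
  have hPQQP : trace (P * Q * (Q * P)) = trace (P * Q) := by
    rw [← Matrix.mul_assoc, Matrix.mul_assoc P, hQQ.eq, hPQP]
  simp only [frobNorm_sq, transpose_sub, transpose_mul, hP, hQ, Matrix.sub_mul, Matrix.mul_sub,
    trace_sub, hPP.eq, hQQ.eq, hPQP, hPQQP, ← Matrix.mul_assoc P Q P, trace_mul_comm Q P, ← htr]
  ring

end Frobenius

theorem IsCompactSVD.frobNorm_proj_sub_le {n1 n2 r : ℕ} {Xt X : Matrix (Fin n1) (Fin n2) ℝ}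
    {Vt V : Matrix (Fin n1) (Fin r) ℝ} {St S : Matrix (Fin r) (Fin r) ℝ}
    {Wt W : Matrix (Fin n2) (Fin r) ℝ} (hXt : IsCompactSVD Xt Vt St Wt)
    (hX : IsCompactSVD X V S W) {σ : ℝ} (hσ : 0 < σ) (hσS : ∀ j, σ ≤ St j j) :
    frobNorm (Vt * Vtᵀ - V * Vᵀ) ≤ √2 * frobNorm (Xt - X) / σ := by
  have hsq := frobNorm_sq_proj_sub_proj (transpose_mul_transpose_self Vt)
    (transpose_mul_transpose_self V) (isIdempotentElem_mul_transpose hXt.2.1)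
    (isIdempotentElem_mul_transpose hX.2.1)
    (by rw [trace_mul_comm, trace_mul_comm V, hXt.2.1, hX.2.1])
  set Q := V * Vᵀ
  set D := Xt - X
  have hbound : frobNorm (Vt * Vtᵀ - Q * (Vt * Vtᵀ)) ≤ frobNorm D / σ :=
    calc frobNorm (Vt * Vtᵀ - Q * (Vt * Vtᵀ)) = frobNorm ((Vt - Q * Vt) * Vtᵀ) := by
          rw [Matrix.sub_mul, Matrix.mul_assoc Q]
      _ = frobNorm (Vt - Q * Vt) := frobNorm_mul_transpose_isometry hXt.2.1 _
      _ = frobNorm ((D - Q * D) * Wt * diagonal fun j => (St j j)⁻¹) := by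
          rw [hXt.sub_proj_mul_eq hX]
      _ ≤ frobNorm ((D - Q * D) * Wt) / σ := frobNorm_mul_diagonal_inv_le hσ hσS _
      _ ≤ frobNorm (D - Q * D) / σ := by gcongr; exact frobNorm_mul_isometry_le hXt.2.2.1 _
      _ ≤ frobNorm D / σ := by
          gcongr
          exact frobNorm_sub_proj_mul_le (transpose_mul_transpose_self V)
            (isIdempotentElem_mul_transpose hX.2.1) _
  calc frobNorm (Vt * Vtᵀ - Q) = √2 * frobNorm (Vt * Vtᵀ - Q * (Vt * Vtᵀ)) := by
        rw [← Real.sqrt_sq (frobNorm_nonneg _), hsq, Real.sqrt_mul zero_le_two,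
          Real.sqrt_sq (frobNorm_nonneg _)]
    _ ≤ √2 * (frobNorm D / σ) := by gcongr
    _ = √2 * frobNorm D / σ := by ring

/-- Perturbation bounds for the orthogonal projections onto the
singular subspaces of two rank-`r` matrices. -/
theorem statement9 {n1 n2 r : ℕ}
    (Xt X : Matrix (Fin n1) (Fin n2) ℝ)
    (Vt : Matrix (Fin n1) (Fin r) ℝ) (St : Matrix (Fin r) (Fin r) ℝ)
    (Wt : Matrix (Fin n2) (Fin r) ℝ) (hXt : IsCompactSVD Xt Vt St Wt)
    (V : Matrix (Fin n1) (Fin r) ℝ) (S : Matrix (Fin r) (Fin r) ℝ)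
    (W : Matrix (Fin n2) (Fin r) ℝ) (hX : IsCompactSVD X V S W) :
    specNorm (Vt * Vtᵀ - V * Vᵀ) ≤ specNorm (Xt - X) / sigmaMin Xt ∧
    frobNorm (Vt * Vtᵀ - V * Vᵀ) ≤ Real.sqrt 2 * frobNorm (Xt - X) / sigmaMin Xt ∧
    specNorm (Wt * Wtᵀ - W * Wᵀ) ≤ specNorm (Xt - X) / sigmaMin Xt ∧
    frobNorm (Wt * Wtᵀ - W * Wᵀ) ≤ Real.sqrt 2 * frobNorm (Xt - X) / sigmaMin Xt := by
  rcases isEmpty_or_nonempty (Fin r) with hr | hr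
  -- rank zero: both projections vanish, while `sigmaMin Xt = sInf ∅ = 0`
  · have hzero : ∀ {n} (A B : Matrix (Fin n) (Fin r) ℝ), A * Bᵀ = 0 := fun _ _ => by
      ext; simp [mul_apply]
    have hspec : 0 ≤ specNorm (Xt - X) / sigmaMin Xt :=
      div_nonneg (norm_nonneg _) (sigmaMin_nonneg Xt)
    have hfrob : 0 ≤ √2 * frobNorm (Xt - X) / sigmaMin Xt :=
      div_nonneg (mul_nonneg (Real.sqrt_nonneg 2) (frobNorm_nonneg _)) (sigmaMin_nonneg Xt)
    simp only [hzero, sub_self]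
    exact ⟨by simpa [specNorm] using hspec, by simpa [frobNorm] using hfrob,
      by simpa [specNorm] using hspec, by simpa [frobNorm] using hfrob⟩
  have hσ := hXt.sigmaMin_pos
  have hσS := hXt.sigmaMin_le
  refine ⟨hXt.specNorm_proj_sub_le hX hσ hσS, hXt.frobNorm_proj_sub_le hX hσ hσS, ?_, ?_⟩
  · simpa only [← transpose_sub, specNorm_transpose] using
      hXt.transpose.specNorm_proj_sub_le hX.transpose hσ hσS
  · simpa only [← transpose_sub, frobNorm_transpose] using
      hXt.transpose.frobNorm_proj_sub_le hX.transpose hσ hσS
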